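/- arXiv:1909.01461 — 7 statements merged into one kernel-verified Lean document; each statement's English description precedes it below -/
import Mathlib

section
/- Let G be a bipartite graph with parts U and V whose girth is at least 12. For each u ∈ U let (A_u, B_u) be a partition of the neighborhood N_G(u) into two (possibly empty) sets, and let H be the graph on vertex set V in which v and w are adjacent if and only if there exists u ∈ U with v ∈ A_u and w ∈ B_u, or v ∈ B_u and w ∈ A_u. Then H contains no cycle of length 5. -/
open SimpleGraph Real

/-- `G` contains a copy of `F` as a subgraph, i.e. there is an injective
graph homomorphism from `F` to `G`. -/
def ContainsCopy {α β : Type*} (F : SimpleGraph α) (G : SimpleGraph β) : Prop :=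
  ∃ f : F →g G, Function.Injective f

/-- `G` is `F`-free: it contains no subgraph isomorphic to `F`. -/
def IsFreeOf {α β : Type*} (G : SimpleGraph β) (F : SimpleGraph α) : Prop :=
  ¬ ContainsCopy F G

/-- `G` has an independent set of size `t`. -/
def HasIndepSetOfSize {V : Type*} (G : SimpleGraph V) (t : ℕ) : Prop :=
  ∃ s : Finset V, s.card = t ∧ ∀ v ∈ s, ∀ w ∈ s, ¬ G.Adj v w

/-- The adjacency matrix of a simple graph over `ℝ` is Hermitian. -/
theorem adjMatrix_isHermitian {V : Type*} [Fintype V] (G : SimpleGraph V)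
    [DecidableRel G.Adj] : (G.adjMatrix ℝ).IsHermitian := by
  rw [Matrix.IsHermitian, Matrix.conjTranspose_eq_transpose_of_trivial]
  exact G.isSymm_adjMatrix

/-- `G` is an `(n,d,λ)`-graph: an `n`-vertex `d`-regular graph each of whose
adjacency-matrix eigenvalues, other than the largest one (which is `d`), has
absolute value at most `lam`. -/
def IsNDLGraph {V : Type*} [Fintype V] [DecidableEq V] (G : SimpleGraph V)
    (n d : ℕ) (lam : ℝ) : Prop :=
  letI : DecidableRel G.Adj := Classical.decRel G.Adj
  Fintype.card V = n ∧ G.IsRegularOfDegree d ∧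
    ∃ i₀ : V, (adjMatrix_isHermitian G).eigenvalues i₀ = (d : ℝ) ∧
      ∀ i : V, i ≠ i₀ → |(adjMatrix_isHermitian G).eigenvalues i| ≤ lam

/-- The number of independent sets of size `t` in `G`. -/
noncomputable def numIndepSets {V : Type*} (G : SimpleGraph V) (t : ℕ) : ℕ :=
  Nat.card {s : Finset V // s.card = t ∧ ∀ v ∈ s, ∀ w ∈ s, ¬ G.Adj v w}


/-!
Pick, for each edge `v i v (i+1)` of a 5-cycle in `H`, a vertex `u i ∈ U` whose parts `A`, `B`
separate its ends. If `u (i-1) ≠ u i`, the edge `u (i-1) v i` is traversed only once by the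
closed walk `v 0, u 0, v 1, u 1, …, u 4, v 0` of length 10 in `G`, so `G` has a cycle of length
at most 10 through it. Hence all `u i` are one vertex `u`, and `v ↦ (v ∈ A u)` properly
2-colours the 5-cycle.
-/

namespace SimpleGraph

theorem egirth_le_length_add_one_of_notMem_edges {α : Type*} {G : SimpleGraph α} {a b : α}
    (h : G.Adj a b) (p : G.Walk b a) (hp : s(a, b) ∉ p.edges) :
    G.egirth ≤ p.length + 1 := by
  classical
  have hc : (Walk.cons h p.bypass).IsCycle :=
    (Walk.cons_isCycle_iff _ h).2
      ⟨p.bypass_isPath, fun he => hp (p.edges_bypass_subset_edges he)⟩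
  calc G.egirth ≤ (Walk.cons h p.bypass).length := egirth_le_length hc
    _ ≤ p.length + 1 := by
      rw [Walk.length_cons]
      exact_mod_cast Nat.add_le_add_right p.length_bypass_le_length 1

theorem not_colorable_two_cycleGraph_of_odd {n : ℕ} (hn : 2 ≤ n) (hodd : Odd n) :
    ¬ (cycleGraph n).Colorable 2 := fun h => by
  have := h.chromaticNumber_le
  rw [chromaticNumber_cycleGraph_of_odd n hn hodd] at this
  exact absurd this (by decide)

end SimpleGraph

theorem Disjoint.mem_ne_mem {α : Type*} {s t : Set α} (hst : Disjoint s t) {x y : α}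
    (h : x ∈ s ∧ y ∈ t ∨ x ∈ t ∧ y ∈ s) : (x ∈ s) ≠ (y ∈ s) := by
  intro hxy
  rcases h with ⟨hx, hy⟩ | ⟨hx, hy⟩
  · exact Set.disjoint_left.1 hst (Eq.mp hxy hx) hy
  · exact Set.disjoint_left.1 hst (Eq.mpr hxy hy) hx

section FiveCenters

variable {U V : Type*} {G : SimpleGraph (U ⊕ V)} {u : Fin 5 → U} {v : Fin 5 → V}

theorem last_center_eq_first_of_lt_egirth (hG : 10 < G.egirth) (hv : Function.Injective v)
    (hl : ∀ i, G.Adj (.inl (u i)) (.inr (v i)))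
    (hr : ∀ i, G.Adj (.inl (u i)) (.inr (v (i + 1)))) :
    u 4 = u 0 := by
  by_contra hne
  let p : G.Walk (.inr (v 0)) (.inl (u 4)) :=
    .cons (hl 0).symm <| .cons (hr 0) <| .cons (hl 1).symm <| .cons (hr 1) <|
    .cons (hl 2).symm <| .cons (hr 2) <| .cons (hl 3).symm <| .cons (hr 3) <|
    .cons (hl 4).symm .nil
  have hp : s(.inl (u 4), .inr (v 0)) ∉ p.edges := by
    simp [p, hne, hv.eq_iff]
  have hlen : p.length = 9 := rfl
  have := egirth_le_length_add_one_of_notMem_edges (hr 4) p hp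
  rw [hlen] at this
  exact absurd (hG.trans_le this) (by decide)

theorem centers_eq_of_lt_egirth (hG : 10 < G.egirth) (hv : Function.Injective v)
    (hl : ∀ i, G.Adj (.inl (u i)) (.inr (v i)))
    (hr : ∀ i, G.Adj (.inl (u i)) (.inr (v (i + 1)))) (i : Fin 5) :
    u i = u 0 := by
  have hpred (k : Fin 5) : u (4 + k) = u (0 + k) :=
    last_center_eq_first_of_lt_egirth (u := fun i => u (i + k)) (v := fun i => v (i + k)) hG
      (hv.comp (add_left_injective k)) (fun i => hl _)
      (fun i => by simpa only [add_right_comm] using hr (i + k))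
  have h1 := hpred 1
  have h2 := hpred 2
  have h3 := hpred 3
  have h4 := hpred 4
  fin_cases i <;> simp_all

end FiveCenters

theorem statement10_general {U V : Type*} (G : SimpleGraph (U ⊕ V))
    (hgirth : (12 : ℕ∞) ≤ G.egirth)
    (A B : U → Set V)
    (hpart : ∀ u v, G.Adj (Sum.inl u) (Sum.inr v) ↔ (v ∈ A u ∨ v ∈ B u))
    (hdisj : ∀ u, Disjoint (A u) (B u))
    (H : SimpleGraph V)
    (hH : ∀ v w, H.Adj v w ↔ ∃ u, (v ∈ A u ∧ w ∈ B u) ∨ (v ∈ B u ∧ w ∈ A u)) :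
    IsFreeOf H (SimpleGraph.cycleGraph 5) := by
  rintro ⟨f, hf⟩
  have hsucc (i : Fin 5) : (cycleGraph 5).Adj i (i + 1) := by simp [cycleGraph_adj]
  choose u hu using fun i => (hH _ _).1 (f.map_adj (hsucc i))
  have hcenter :=
    centers_eq_of_lt_egirth (u := u) (v := f) (lt_of_lt_of_le (by decide) hgirth) hf
    (fun i => (hpart _ _).2 (by have := hu i; tauto))
    (fun i => (hpart _ _).2 (by have := hu i; tauto))
  have hside (i : Fin 5) : (f i ∈ A (u 0)) ≠ (f (i + 1) ∈ A (u 0)) := by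
    rw [← hcenter i]
    exact (hdisj (u i)).mem_ne_mem (hu i)
  refine not_colorable_two_cycleGraph_of_odd (n := 5) (by norm_num) (by decide) ?_
  refine Fintype.card_prop ▸ (Coloring.mk (fun i => f i ∈ A (u 0)) ?_).colorable
  intro i j hij
  rcases cycleGraph_adj.1 hij with h | h <;> rw [sub_eq_iff_eq_add'] at h <;> subst h
  · exact (hside j).symm
  · exact hside i

/-- Let `G` be a bipartite graph with parts `U` and `V` of girth at least 12.
For each `u ∈ U` let `(A u, B u)` be a partition of the neighbourhood of `u`
(a subset of `V`) into two possibly empty sets, and let `H` be the graph on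
`V` where `v, w` are adjacent iff for some `u`, `v ∈ A u ∧ w ∈ B u` or
`v ∈ B u ∧ w ∈ A u`. Then `H` contains no cycle of length 5. -/
theorem statement10 {U V : Type*} (G : SimpleGraph (U ⊕ V))
    (hbip : ∀ a b, G.Adj a b →
      (∃ u v, (a = Sum.inl u ∧ b = Sum.inr v) ∨ (a = Sum.inr v ∧ b = Sum.inl u)))
    (hgirth : (12 : ℕ∞) ≤ G.egirth)
    (A B : U → Set V)
    (hpart : ∀ u v, G.Adj (Sum.inl u) (Sum.inr v) ↔ (v ∈ A u ∨ v ∈ B u))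
    (hdisj : ∀ u, Disjoint (A u) (B u))
    (H : SimpleGraph V)
    (hH : ∀ v w, H.Adj v w ↔ ∃ u, (v ∈ A u ∧ w ∈ B u) ∨ (v ∈ B u ∧ w ∈ A u)) :
    IsFreeOf H (SimpleGraph.cycleGraph 5) :=
  statement10_general G hgirth A B hpart hdisj H hH
end

section
/- Let G be a bipartite graph with parts U and V whose girth is at least 16. For each u ∈ U let (A_u, B_u) be a partition of the neighborhood N_G(u) into two (possibly empty) sets, and let H be the graph on vertex set V in which v and w are adjacent if and only if there exists u ∈ U with v ∈ A_u and w ∈ B_u, or v ∈ B_u and w ∈ A_u. Then H contains no cycle of length 7. -/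
open SimpleGraph Real

/-! Label an edge `s(inl u, inr v)` of `G` by `1` when `v ∈ B u`. Each edge `vw` of `H` lifts to
a path `v u w` in `G` whose two labels sum to `1` mod 2, so a 7-cycle of `H` lifts to a closed
walk of length 14 in `G` with label sum `7 ≡ 1`. But the edges of a closed walk shorter than
the girth span a forest; each of them is a bridge there, so the walk crosses it an even number
of times and every label sum along it vanishes. -/

namespace SimpleGraph

variable {V : Type*} {G : SimpleGraph V}

theorem IsBridge.even_count_edges [DecidableEq V] {e : Sym2 V} (he : G.IsBridge e) {x : V}
    (p : G.Walk x x) : Even (p.edges.count e) := by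
  classical
  induction e using Sym2.ind with | h a b => ?_
  let S : V → ZMod 2 := fun y => if (G.deleteEdges {s(a, b)}).Reachable a y then 1 else 0
  have hSa : S a = 1 := if_pos .rfl
  have hSb : S b = 0 := if_neg (isBridge_iff.mp he)
  have hstep : ∀ {u w}, G.Adj u w → (if s(u, w) = s(a, b) then 1 else 0) = S w - S u := by
    intro u w huw
    split_ifs with hab
    · rcases Sym2.eq_iff.mp hab with ⟨hu, hw⟩ | ⟨hu, hw⟩
      · rw [hu, hw, hSa, hSb]; decide
      · rw [hu, hw, hSa, hSb]; decide
    · have hadj : (G.deleteEdges {s(a, b)}).Adj u w := deleteEdges_adj.mpr ⟨huw, hab⟩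
      have hreach : (G.deleteEdges {s(a, b)}).Reachable a u ↔
          (G.deleteEdges {s(a, b)}).Reachable a w :=
        ⟨fun h => h.trans hadj.reachable, fun h => h.trans hadj.symm.reachable⟩
      simp only [S, hreach, sub_self]
  have hcount : ∀ {u v} (q : G.Walk u v), (q.edges.count s(a, b) : ZMod 2) = S v - S u := by
    intro u v q
    induction q with
    | nil => simp
    | cons h q ih =>
      simp only [Walk.edges_cons, List.count_cons, beq_iff_eq, Nat.cast_add, Nat.cast_ite,
        Nat.cast_one, Nat.cast_zero, ih, hstep h, sub_add_sub_cancel]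
  rw [← ZMod.natCast_eq_zero_iff_even, hcount, sub_self]

theorem Walk.sum_map_edges_eq_zero_of_length_lt_egirth (f : Sym2 V → ZMod 2) {x : V}
    (p : G.Walk x x) (hp : p.length < G.egirth) : (p.edges.map f).sum = 0 := by
  classical
  set T : SimpleGraph V := fromEdgeSet {e | e ∈ p.edges}
  have hpT : ∀ e ∈ p.edges, e ∈ T.edgeSet := fun e he => by
    rw [edgeSet_fromEdgeSet]
    exact ⟨he, G.not_isDiag_of_mem_edgeSet (p.edges_subset_edgeSet he)⟩
  have hTG : T ≤ G := (fromEdgeSet_le G).mpr fun e he => p.edges_subset_edgeSet he.1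
  have hT : T.IsAcyclic := by
    intro y c hc
    have hcp : c.edges.toFinset ⊆ p.edges.toFinset := fun e he => by
      have := c.edges_subset_edgeSet (List.mem_toFinset.mp he)
      rw [edgeSet_fromEdgeSet] at this
      exact List.mem_toFinset.mpr this.1
    have hcard : c.length ≤ p.length := calc
      c.length = c.edges.toFinset.card := by
        rw [List.toFinset_card_of_nodup hc.edges_nodup, Walk.length_edges]
      _ ≤ p.edges.toFinset.card := Finset.card_le_card hcp
      _ ≤ p.length := p.length_edges ▸ List.toFinset_card_le _
    have hgirth := egirth_le_length (hc.mapLe hTG)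
    rw [Walk.length_mapLe] at hgirth
    exact absurd (hgirth.trans (by exact_mod_cast hcard)) hp.not_ge
  rw [Finset.sum_list_map_count]
  refine Finset.sum_eq_zero fun e he => ?_
  have hbridge := isAcyclic_iff_forall_isBridge.mp hT (hpT e (List.mem_toFinset.mp he))
  have heven := hbridge.even_count_edges (p.transfer T hpT)
  rw [Walk.edges_transfer, ← ZMod.natCast_eq_zero_iff_even] at heven
  rw [nsmul_eq_mul, heven, zero_mul]

variable {W : Type*} {H : SimpleGraph W} (ι : W → V) (c : Sym2 V → ZMod 2)

theorem Walk.exists_lift_sum_map_edges_eq_length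
    (hlift : ∀ v w, H.Adj v w →
      ∃ x, G.Adj (ι v) x ∧ G.Adj x (ι w) ∧ c s(ι v, x) + c s(x, ι w) = 1)
    {v w : W} (p : H.Walk v w) :
    ∃ q : G.Walk (ι v) (ι w), q.length = 2 * p.length ∧ (q.edges.map c).sum = p.length := by
  induction p with
  | nil => exact ⟨.nil, rfl, by simp⟩
  | cons h p ih =>
    obtain ⟨x, hvx, hxw, hc⟩ := hlift _ _ h
    obtain ⟨q, hlen, hsum⟩ := ih
    refine ⟨.cons hvx (.cons hxw q), by simp [hlen]; ring, ?_⟩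
    simp only [Walk.edges_cons, List.map_cons, List.sum_cons, hsum, Walk.length_cons,
      Nat.cast_add, Nat.cast_one]
    linear_combination hc

theorem Walk.even_length_of_lift
    (hlift : ∀ v w, H.Adj v w →
      ∃ x, G.Adj (ι v) x ∧ G.Adj x (ι w) ∧ c s(ι v, x) + c s(x, ι w) = 1)
    {v : W} (p : H.Walk v v) (hp : 2 * p.length < G.egirth) : Even p.length := by
  obtain ⟨q, hlen, hsum⟩ := p.exists_lift_sum_map_edges_eq_length ι c hlift
  rw [← ZMod.natCast_eq_zero_iff_even, ← hsum]
  exact q.sum_map_edges_eq_zero_of_length_lt_egirth c (by rw [hlen]; exact_mod_cast hp)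

end SimpleGraph

theorem statement11_general {U V : Type*} (G : SimpleGraph (U ⊕ V))
    (hgirth : (16 : ℕ∞) ≤ G.egirth)
    (A B : U → Set V)
    (hpart : ∀ u v, G.Adj (Sum.inl u) (Sum.inr v) ↔ (v ∈ A u ∨ v ∈ B u))
    (hdisj : ∀ u, Disjoint (A u) (B u))
    (H : SimpleGraph V)
    (hH : ∀ v w, H.Adj v w ↔ ∃ u, (v ∈ A u ∧ w ∈ B u) ∨ (v ∈ B u ∧ w ∈ A u)) :
    IsFreeOf H (SimpleGraph.cycleGraph 7) := by
  classical
  rintro ⟨f, -⟩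
  let c : Sym2 (U ⊕ V) → ZMod 2 := fun e =>
    if ∃ u, ∃ v ∈ B u, e = s(.inl u, .inr v) then 1 else 0
  have hc : ∀ u v, c s(.inl u, .inr v) = if v ∈ B u then 1 else 0 := by
    intro u v
    simp [c]
  have hlift : ∀ v w, H.Adj v w → ∃ x, G.Adj (.inr v) x ∧ G.Adj x (.inr w) ∧
      c s(.inr v, x) + c s(x, .inr w) = 1 := by
    intro v w hvw
    obtain ⟨u, ⟨hv, hw⟩ | ⟨hv, hw⟩⟩ := (hH v w).mp hvw
    · refine ⟨.inl u, ((hpart u v).mpr (.inl hv)).symm, (hpart u w).mpr (.inr hw), ?_⟩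
      rw [Sym2.eq_swap, hc, hc, if_neg ((hdisj u).notMem_of_mem_left hv), if_pos hw, zero_add]
    · refine ⟨.inl u, ((hpart u v).mpr (.inr hv)).symm, (hpart u w).mpr (.inl hw), ?_⟩
      rw [Sym2.eq_swap, hc, hc, if_neg ((hdisj u).notMem_of_mem_left hw), if_pos hv, add_zero]
  have heven := ((cycleGraph.cycle 4).map f).even_length_of_lift Sum.inr c hlift
    (by rw [Walk.length_map, cycleGraph.length_cycle]; exact lt_of_lt_of_le (by decide) hgirth)
  rw [Walk.length_map, cycleGraph.length_cycle] at heven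
  exact absurd heven (by decide)

/-- Let `G` be a bipartite graph with parts `U` and `V` of girth at least 16.
For each `u ∈ U` let `(A u, B u)` be a partition of the neighbourhood of `u`
(a subset of `V`) into two possibly empty sets, and let `H` be the graph on
`V` where `v, w` are adjacent iff for some `u`, `v ∈ A u ∧ w ∈ B u` or
`v ∈ B u ∧ w ∈ A u`. Then `H` contains no cycle of length 7. -/
theorem statement11 {U V : Type*} (G : SimpleGraph (U ⊕ V))
    (hbip : ∀ a b, G.Adj a b →
      (∃ u v, (a = Sum.inl u ∧ b = Sum.inr v) ∨ (a = Sum.inr v ∧ b = Sum.inl u)))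
    (hgirth : (16 : ℕ∞) ≤ G.egirth)
    (A B : U → Set V)
    (hpart : ∀ u v, G.Adj (Sum.inl u) (Sum.inr v) ↔ (v ∈ A u ∨ v ∈ B u))
    (hdisj : ∀ u, Disjoint (A u) (B u))
    (H : SimpleGraph V)
    (hH : ∀ v w, H.Adj v w ↔ ∃ u, (v ∈ A u ∧ w ∈ B u) ∨ (v ∈ B u ∧ w ∈ A u)) :
    IsFreeOf H (SimpleGraph.cycleGraph 7) :=
  statement11_general G hgirth A B hpart hdisj H hH
end

section
/- Let G be a bipartite graph with parts U and V, where |U| = m, and suppose every vertex of V has degree at least d in G. For each u ∈ U, choose independently a uniformly random ordered partition (A_u, B_u) of N_G(u), and let H be the random graph on vertex set V obtained by placing a complete bipartite graph with parts A_u and B_u for each u ∈ U. Then for every fixed set I ⊆ V with |I| = t, the probability that I is an independent set in H is at most 2^{m − d·t}. -/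
open SimpleGraph Real

/-
Write `s u` for the number of neighbours of `u` in `I`. The set `I` is independent in `H` exactly
when every colouring `f u` is constant on those `s u` vertices. The colourings for different `u`
are independent and each such constraint holds with probability at most `2 ^ (1 - s u)`, so the
probability is at most `2 ^ (m - ∑ u, s u)`. Counting the edges between `U` and `I` from the side
of `I` gives `∑ u, s u ≥ d t`.
-/

open Finset

theorem card_constOn_mul_pow_card_le {V β : Type*} [Fintype V] [Fintype β] [Nonempty β]
    (S : Finset V) :
    Nat.card {g : V → β // ∀ v ∈ S, ∀ w ∈ S, g v = g w} * Fintype.card β ^ #S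
      ≤ Fintype.card β * Fintype.card β ^ Fintype.card V := by
  classical
  let extend : β × ({v // v ∉ S} → β) → {g : V → β // ∀ v ∈ S, ∀ w ∈ S, g v = g w} :=
    fun p => ⟨fun v => if hv : v ∈ S then p.1 else p.2 ⟨v, hv⟩, fun v hv w hw => by simp [hv, hw]⟩
  have hextend : Function.Surjective extend := by
    rintro ⟨g, hg⟩
    obtain ⟨b, hb⟩ : ∃ b, ∀ v ∈ S, g v = b := by
      rcases S.eq_empty_or_nonempty with rfl | ⟨v₀, hv₀⟩
      · exact ⟨Classical.arbitrary β, by simp⟩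
      · exact ⟨g v₀, fun v hv => hg v hv v₀ hv₀⟩
    refine ⟨(b, fun v => g v), Subtype.ext (funext fun v => ?_)⟩
    by_cases hv : v ∈ S <;> simp [extend, hv, hb]
  calc _ ≤ Nat.card (β × ({v // v ∉ S} → β)) * Fintype.card β ^ #S :=
        Nat.mul_le_mul_right _ (Nat.card_le_card_of_surjective extend hextend)
    _ = Fintype.card β * Fintype.card β ^ Fintype.card V := by
        rw [Nat.card_eq_fintype_card, Fintype.card_prod, Fintype.card_fun, mul_assoc,
          Fintype.card_subtype_compl, Fintype.card_coe, pow_sub_mul_pow _ S.card_le_univ]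

theorem card_pairwise_agree_eq_prod {U V β : Type*} [Fintype U] (R : U → V → Prop)
    [DecidableRel R] (I : Finset V) :
    Nat.card {f : U → V → β // ∀ v ∈ I, ∀ w ∈ I, ¬ ∃ u, R u v ∧ R u w ∧ f u v ≠ f u w}
      = ∏ u, Nat.card {g : V → β //
          ∀ v ∈ I.bipartiteAbove R u, ∀ w ∈ I.bipartiteAbove R u, g v = g w} := by
  rw [← Nat.card_pi]
  refine Nat.card_congr ((Equiv.subtypeEquivRight fun f => ?_).trans Equiv.subtypePiEquivPi)
  simp only [mem_bipartiteAbove, not_exists, not_and, not_not]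
  grind

theorem card_mul_le_sum_card_bipartiteAbove {U V : Type*} [Fintype U] (R : U → V → Prop)
    [DecidableRel R] (I : Finset V) (d : ℕ)
    (hdeg : ∀ v : V, d ≤ Nat.card {u : U // R u v}) :
    d * #I ≤ ∑ u, #(I.bipartiteAbove R u) := by
  rw [sum_card_bipartiteAbove_eq_sum_card_bipartiteBelow, mul_comm, ← smul_eq_mul]
  refine card_nsmul_le_sum _ _ _ fun v _ => ?_
  simpa [bipartiteBelow, Nat.card_eq_fintype_card, Fintype.card_subtype] using hdeg v

/-- Let `G` be a bipartite graph with parts `U` and `V` (given by the adjacency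
relation `R` between `U` and `V`), with `|U| = m` and every vertex of `V` of
degree at least `d`. For each `u ∈ U` pick a uniformly random ordered
partition of `N_G(u)` independently (equivalently, a uniformly random
`f : U → V → Bool`, vertex `v ∈ N_G(u)` going to `A u` or `B u` according to
`f u v`), and let `H` be the graph on `V` joining `v, w` iff for some `u`
one of them lies in `A u` and the other in `B u`. Then for every `I ⊆ V`
with `|I| = t`, the probability that `I` is independent in `H` is at most
`2^{m - d·t}`. -/
theorem statement13 {U V : Type*} [Fintype U] [Fintype V] (R : U → V → Prop)
    (m d t : ℕ) (hm : Fintype.card U = m)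
    (hdeg : ∀ v : V, d ≤ Nat.card {u : U // R u v})
    (I : Finset V) (hI : I.card = t) :
    (Nat.card {f : U → V → Bool // ∀ v ∈ I, ∀ w ∈ I,
        ¬ ∃ u : U, R u v ∧ R u w ∧ f u v ≠ f u w} : ℝ) /
      (Nat.card (U → V → Bool) : ℝ)
      ≤ (2 : ℝ) ^ ((m : ℤ) - (d : ℤ) * (t : ℤ)) := by
  classical
  have hcount : Nat.card {f : U → V → Bool // ∀ v ∈ I, ∀ w ∈ I,
      ¬ ∃ u : U, R u v ∧ R u w ∧ f u v ≠ f u w} * 2 ^ (d * t)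
        ≤ 2 ^ m * Nat.card (U → V → Bool) := by
    rw [card_pairwise_agree_eq_prod]
    set c : U → ℕ := fun u => Nat.card {g : V → Bool //
      ∀ v ∈ I.bipartiteAbove R u, ∀ w ∈ I.bipartiteAbove R u, g v = g w}
    calc (∏ u, c u) * 2 ^ (d * t)
        ≤ (∏ u, c u) * 2 ^ ∑ u, #(I.bipartiteAbove R u) := by
          gcongr
          · norm_num
          · exact hI ▸ card_mul_le_sum_card_bipartiteAbove R I d hdeg
      _ = ∏ u, c u * 2 ^ #(I.bipartiteAbove R u) := by
          rw [prod_mul_distrib, prod_pow_eq_pow_sum]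
      _ ≤ ∏ _u : U, 2 * 2 ^ Fintype.card V :=
          prod_le_prod' fun u _ => card_constOn_mul_pow_card_le (β := Bool) _
      _ = 2 ^ m * Nat.card (U → V → Bool) := by
          simp [hm, mul_pow]
  have hden : (0 : ℝ) < Nat.card (U → V → Bool) := Nat.cast_pos.2 Nat.card_pos
  rw [div_le_iff₀ hden, zpow_sub₀ two_ne_zero, ← Nat.cast_mul, zpow_natCast, zpow_natCast,
    div_mul_eq_mul_div, le_div_iff₀ (by positivity)]
  exact_mod_cast hcount
end

section
/- Let G be a bipartite graph with parts U and V, where |U| = m and |V| = n, and suppose every vertex of V has degree at least d in G. Let t be a positive integer with d·t > m + t·log₂ n. Then there exists a choice of partitions (A_u, B_u) of the neighborhoods N_G(u), u ∈ U, such that the graph H on vertex set V obtained by placing a complete bipartite graph with parts A_u and B_u for each u ∈ U has no independent set of size t. -/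
open SimpleGraph Real

/-!
Encode a choice of partitions by `f : U → V → Bool`, with `A u = {v ∈ N(u) | f u v}`. A fixed
`t`-set `S` is independent in `H` iff every `f u` is constant on `S ∩ N(u)`, which pins down at
least `∑ᵤ (|S ∩ N(u)| - 1) ≥ dt - m` bits of `f`; so `S` is independent for at most a `2^(m - dt)`
fraction of all colourings. A union bound over the at most `n^t` sets `S` leaves a good colouring
once `n^t 2^m < 2^(dt)`, which is the hypothesis after taking `log₂`.
-/

open Finset

section Colourings

variable {U V : Type*} [Fintype U] [Fintype V] [DecidableEq U] [DecidableEq V]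

def constOnColourings (T : Finset V) : Finset (V → Bool) :=
  {g | ∀ v ∈ T, ∀ w ∈ T, g v = g w}

/-- `f u` splits `N(u)` into the sides `{f u = true}` and `{f u = false}`; the set `S` is
independent in the resulting graph iff each `f u` is constant on `S ∩ N(u)`. -/
def indepColourings (R : U → V → Prop) [∀ u v, Decidable (R u v)] (S : Finset V) :
    Finset (U → V → Bool) :=
  Fintype.piFinset fun u => constOnColourings {v ∈ S | R u v}

theorem card_constOnColourings_mul_le (T : Finset V) :
    #(constOnColourings T) * 2 ^ #T ≤ 2 ^ (Fintype.card V + 1) := by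
  let extend : Bool × ({v // v ∉ T} → Bool) → V → Bool :=
    fun p v => if hv : v ∈ T then p.1 else p.2 ⟨v, hv⟩
  have hsub : constOnColourings T ⊆ univ.image extend := by
    intro g hg
    replace hg := (mem_filter.1 hg).2
    -- the first component is the common value of `g` on `T`
    refine mem_image.2 ⟨(decide (∃ v ∈ T, g v = true), fun v => g v), mem_univ _, ?_⟩
    funext v
    by_cases hv : v ∈ T
    · cases hgv : g v
      · simpa [extend, hv] using fun w hw => (hg w hw v hv).trans hgv
      · simpa [extend, hv] using ⟨v, hv, hgv⟩
    · simp [extend, hv]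
  calc #(constOnColourings T) * 2 ^ #T ≤ 2 * 2 ^ (Fintype.card V - #T) * 2 ^ #T := by
        gcongr
        refine (card_le_card hsub).trans (card_image_le.trans ?_)
        simp
    _ = 2 ^ (Fintype.card V + 1) := by
        rw [mul_assoc, ← pow_add, Nat.sub_add_cancel (card_le_univ T), pow_succ']

variable (R : U → V → Prop) [∀ u v, Decidable (R u v)]

theorem mem_indepColourings {S : Finset V} {f : U → V → Bool} :
    f ∈ indepColourings R S ↔ ∀ u, ∀ v ∈ S, ∀ w ∈ S, R u v → R u w → f u v = f u w := by
  simp only [indepColourings, constOnColourings, Fintype.mem_piFinset, mem_filter, mem_univ,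
    true_and, and_imp]
  exact ⟨fun h u v hv w hw hRv hRw => h u v hv hRv w hw hRw,
    fun h u v hv hRv w hw hRw => h u v hv w hw hRv hRw⟩

theorem card_indepColourings_mul_le {d : ℕ} (S : Finset V) (hdeg : ∀ v ∈ S, d ≤ #{u | R u v}) :
    #(indepColourings R S) * 2 ^ (d * #S) ≤ 2 ^ (Fintype.card U * (Fintype.card V + 1)) := by
  have hedges : d * #S ≤ ∑ u, #{v ∈ S | R u v} := by
    calc d * #S = #S • d := by rw [smul_eq_mul, mul_comm]
      _ ≤ ∑ v ∈ S, #{u | R u v} := card_nsmul_le_sum _ _ _ hdeg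
      _ = ∑ u, #{v ∈ S | R u v} :=
        (sum_card_bipartiteAbove_eq_sum_card_bipartiteBelow (r := R)).symm
  calc #(indepColourings R S) * 2 ^ (d * #S)
      ≤ (∏ u, #(constOnColourings {v ∈ S | R u v})) * 2 ^ (∑ u, #{v ∈ S | R u v}) := by
        rw [indepColourings, Fintype.card_piFinset]
        gcongr
        norm_num
    _ = ∏ u, #(constOnColourings {v ∈ S | R u v}) * 2 ^ #{v ∈ S | R u v} := by
        rw [prod_mul_distrib, prod_pow_eq_pow_sum]
    _ ≤ ∏ _u : U, 2 ^ (Fintype.card V + 1) :=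
        prod_le_prod' fun u _ => card_constOnColourings_mul_le _
    _ = 2 ^ (Fintype.card U * (Fintype.card V + 1)) := by
        rw [prod_const, card_univ, ← pow_mul, mul_comm]

theorem exists_forall_not_mem_indepColourings {d t : ℕ}
    (hdeg : ∀ v, d ≤ #{u | R u v})
    (hcount : (Fintype.card V).choose t * 2 ^ Fintype.card U < 2 ^ (d * t)) :
    ∃ f, ∀ S : Finset V, #S = t → f ∉ indepColourings R S := by
  by_contra! hcover
  set m := Fintype.card U
  set n := Fintype.card V
  have hunion : (2 ^ n) ^ m ≤ ∑ S ∈ powersetCard t univ, #(indepColourings R S) := by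
    have hsub :
        (univ : Finset (U → V → Bool)) ⊆ (powersetCard t univ).biUnion (indepColourings R) := by
      intro f _
      obtain ⟨S, hS, hf⟩ := hcover f
      exact mem_biUnion.2 ⟨S, mem_powersetCard.2 ⟨subset_univ S, hS⟩, hf⟩
    simpa [m, n] using (card_le_card hsub).trans card_biUnion_le
  have hbound : (2 ^ n) ^ m * 2 ^ (d * t) ≤ (2 ^ n) ^ m * (n.choose t * 2 ^ m) := calc
    (2 ^ n) ^ m * 2 ^ (d * t)
      ≤ ∑ S ∈ powersetCard t univ, #(indepColourings R S) * 2 ^ (d * t) := by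
        rw [← sum_mul]
        exact Nat.mul_le_mul_right _ hunion
    _ ≤ ∑ _S ∈ powersetCard t (univ : Finset V), 2 ^ (m * (n + 1)) :=
        sum_le_sum fun S hS => (mem_powersetCard.1 hS).2 ▸
          card_indepColourings_mul_le R S fun v _ => hdeg v
    _ = (2 ^ n) ^ m * (n.choose t * 2 ^ m) := by
        rw [sum_const, card_powersetCard, card_univ, smul_eq_mul]
        ring
  exact (Nat.le_of_mul_le_mul_left hbound (by positivity)).not_gt hcount

end Colourings

theorem choose_mul_two_pow_lt {m n d t : ℕ} (ht : 0 < t)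
    (hdt : (m : ℝ) + t * Real.logb 2 n < d * t) : n.choose t * 2 ^ m < 2 ^ (d * t) := by
  rcases Nat.eq_zero_or_pos n with rfl | hn
  · simp [Nat.choose_eq_zero_of_lt ht]
  refine (Nat.mul_le_mul_right _ (Nat.choose_le_pow n t)).trans_lt ?_
  rw [← Nat.cast_lt (α := ℝ),
    ← Real.logb_lt_logb_iff (b := 2) one_lt_two (by positivity) (by positivity)]
  push_cast
  rw [Real.logb_mul (by positivity) (by positivity), Real.logb_pow, Real.logb_pow, Real.logb_pow,
    Real.logb_self_eq_one one_lt_two]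
  push_cast
  linarith

/-- Let `G` be a bipartite graph with parts `U` and `V` (given by the adjacency
relation `R`), `|U| = m`, `|V| = n`, every vertex of `V` of degree at least
`d`, and let `t > 0` satisfy `d·t > m + t·log₂ n`. Then the neighbourhoods
`N_G(u)` can be partitioned into pairs `(A u, B u)` so that the graph `H` on
`V` obtained by placing a complete bipartite graph between `A u` and `B u`
for each `u` has no independent set of size `t`. -/
theorem statement14 {U V : Type*} [Fintype U] [Fintype V] (R : U → V → Prop)
    (m n d t : ℕ) (hm : Fintype.card U = m) (hn : Fintype.card V = n)
    (hdeg : ∀ v : V, d ≤ Nat.card {u : U // R u v})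
    (ht : 0 < t) (hdt : (m : ℝ) + (t : ℝ) * Real.logb 2 n < (d : ℝ) * t) :
    ∃ A B : U → Set V,
      (∀ u v, R u v ↔ (v ∈ A u ∨ v ∈ B u)) ∧
      (∀ u, Disjoint (A u) (B u)) ∧
      ¬ ∃ S : Finset V, S.card = t ∧ ∀ v ∈ S, ∀ w ∈ S,
          ¬ ∃ u : U, (v ∈ A u ∧ w ∈ B u) ∨ (v ∈ B u ∧ w ∈ A u) := by
  classical
  subst hm hn
  have hdeg' : ∀ v, d ≤ #{u | R u v} := fun v => by
    simpa only [Nat.card_eq_fintype_card, Fintype.card_subtype] using hdeg v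
  obtain ⟨f, hf⟩ :=
    exists_forall_not_mem_indepColourings R hdeg' (choose_mul_two_pow_lt ht hdt)
  refine ⟨fun u => {v | R u v ∧ f u v = true}, fun u => {v | R u v ∧ f u v = false},
    fun u v => ?_, fun u => Set.disjoint_left.2 fun v hA hB => ?_, ?_⟩
  · cases hfv : f u v <;> simp [hfv]
  · simp_all
  · rintro ⟨S, hS, hindep⟩
    refine hf S hS ((mem_indepColourings R).2 fun u v hv w hw hRv hRw => ?_)
    by_contra hne
    exact hindep v hv w hw ⟨u, by cases hfv : f u v <;> cases hfw : f u w <;> simp_all⟩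
end

section
/- Let G be a triangle-free (n,d,λ)-graph with n ≥ 2. Then d³ ≤ λ³·(n − 1). (Indeed, the trace of the cube of the adjacency matrix A of G is zero since G is triangle-free, and tr(A³) ≥ d³ − λ³(n−1).) -/
open SimpleGraph Real

/-! Triangle-freeness makes `tr A³ = ∑ μᵢ³` vanish. The top eigenvalue contributes `d³` to this
sum and each of the other `n - 1` eigenvalues at least `-λ³`, so `0 ≥ d³ - λ³(n - 1)`. -/

open Matrix Unitary in
theorem Matrix.IsHermitian.trace_pow {𝕜 n : Type*} [RCLike 𝕜] [Fintype n] [DecidableEq n]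
    {A : Matrix n n 𝕜} (hA : A.IsHermitian) (k : ℕ) :
    (A ^ k).trace = ∑ i, (hA.eigenvalues i : 𝕜) ^ k := by
  conv_lhs => rw [hA.spectral_theorem, ← map_pow, conjStarAlgAut_apply, trace_mul_cycle,
    coe_star_mul_self, one_mul, diagonal_pow, trace_diagonal]
  simp only [Pi.pow_apply, Function.comp_apply]

theorem SimpleGraph.trace_adjMatrix_pow_three_eq_zero {V α : Type*} [Fintype V] [DecidableEq V]
    [Semiring α] {G : SimpleGraph V} [DecidableRel G.Adj] (hG : G.CliqueFree 3) :
    (G.adjMatrix α ^ 3).trace = 0 := by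
  rw [pow_three, Matrix.trace]
  refine Finset.sum_eq_zero fun i _ ↦ ?_
  rw [Matrix.diag_apply, Matrix.mul_apply]
  refine Finset.sum_eq_zero fun k _ ↦ ?_
  rw [Matrix.mul_apply, Finset.mul_sum]
  refine Finset.sum_eq_zero fun j _ ↦ ?_
  by_cases hik : G.Adj i k
  · by_cases hkj : G.Adj k j
    · have hji : ¬ G.Adj j i := fun hji ↦ hG _ (is3Clique_triple_iff.2 ⟨hik, hji.symm, hkj⟩)
      simp [hji]
    · simp [hkj]
  · simp [hik]

theorem sum_pow_three_ge_of_abs_le {ι : Type*} [Fintype ι] [DecidableEq ι] {f : ι → ℝ} {c : ℝ}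
    (i₀ : ι) (hf : ∀ i, i ≠ i₀ → |f i| ≤ c) :
    f i₀ ^ 3 - c ^ 3 * (Fintype.card ι - 1) ≤ ∑ i, f i ^ 3 := by
  have : Nonempty ι := ⟨i₀⟩
  have hcube : ∀ i ∈ Finset.univ.erase i₀, -c ^ 3 ≤ f i ^ 3 := fun i hi ↦ by
    rw [← Odd.neg_pow (by decide), Odd.pow_le_pow (by decide)]
    exact neg_le_of_abs_le (hf i (Finset.ne_of_mem_erase hi))
  have hcard : ((Finset.univ.erase i₀).card : ℝ) = Fintype.card ι - 1 := by
    rw [Finset.card_erase_of_mem (Finset.mem_univ i₀), Finset.card_univ,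
      Nat.cast_pred Fintype.card_pos]
  have hrest := Finset.card_nsmul_le_sum _ _ _ hcube
  rw [nsmul_eq_mul, hcard] at hrest
  rw [← Finset.add_sum_erase _ _ (Finset.mem_univ i₀)]
  linarith

theorem statement16_general {V : Type*} [Fintype V] [DecidableEq V] (G : SimpleGraph V)
    (n d : ℕ) (lam : ℝ) (hG : IsNDLGraph G n d lam)
    (htri : G.CliqueFree 3) :
    (d : ℝ) ^ 3 ≤ lam ^ 3 * ((n : ℝ) - 1) := by
  let : DecidableRel G.Adj := Classical.decRel G.Adj
  obtain ⟨hcard, -, i₀, hi₀, hbound⟩ := hG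
  have hA := adjMatrix_isHermitian G
  have hsum : ∑ i, hA.eigenvalues i ^ 3 = 0 := by
    simpa using (hA.trace_pow 3).symm.trans (trace_adjMatrix_pow_three_eq_zero htri)
  have hlower := sum_pow_three_ge_of_abs_le i₀ hbound
  rw [hsum, hi₀, hcard] at hlower
  linarith

/-- A triangle-free `(n,d,λ)`-graph with `n ≥ 2` satisfies `d³ ≤ λ³(n-1)`. -/
theorem statement16 {V : Type*} [Fintype V] [DecidableEq V] (G : SimpleGraph V)
    (n d : ℕ) (lam : ℝ) (hG : IsNDLGraph G n d lam)
    (htri : G.CliqueFree 3) (hn : 2 ≤ n) :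
    (d : ℝ) ^ 3 ≤ lam ^ 3 * ((n : ℝ) - 1) :=
  statement16_general G n d lam hG htri
end

section
/- Let c > 0 and let G be a triangle-free (n,d,λ)-graph with n ≥ 2 and λ ≤ c·√d. Then d ≤ c²·(n − 1)^{2/3}. -/
open SimpleGraph Real

/-! Triangle-freeness gives `tr A³ = 0`, i.e. `∑ λᵢ³ = 0` over the spectrum of `A`. Isolating the top
eigenvalue `d`, `d³ ≤ (n - 1) λ³ ≤ (n - 1) c³ d^{3/2}`, hence `d^{3/2} ≤ c³ (n - 1)`. -/

namespace Matrix.IsHermitian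

variable {𝕜 n : Type*} [RCLike 𝕜] [Fintype n] [DecidableEq n] {A : Matrix n n 𝕜}

theorem trace_pow_eq_sum_eigenvalues_pow (hA : A.IsHermitian) (k : ℕ) :
    (A ^ k).trace = ∑ i, (hA.eigenvalues i : 𝕜) ^ k := by
  conv_lhs => rw [hA.spectral_theorem, ← map_pow, Unitary.conjStarAlgAut_apply,
    trace_mul_cycle, Unitary.coe_star_mul_self, one_mul, diagonal_pow, trace_diagonal]
  rfl

end Matrix.IsHermitian

namespace SimpleGraph

variable {V : Type*} [Fintype V] [DecidableEq V] {G : SimpleGraph V} [DecidableRel G.Adj]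

theorem CliqueFree.trace_adjMatrix_pow_three {R : Type*} [Semiring R]
    (h : G.CliqueFree 3) : ((G.adjMatrix R) ^ 3).trace = 0 := by
  refine Finset.sum_eq_zero fun u _ => ?_
  rw [Matrix.diag_apply, pow_succ', adjMatrix_mul_apply]
  refine Finset.sum_eq_zero fun v huv => ?_
  rw [pow_two, adjMatrix_mul_apply]
  refine Finset.sum_eq_zero fun w hvw => ?_
  have hwu : ¬ G.Adj w u := fun hwu => h {u, v, w} <|
    is3Clique_triple_iff.mpr ⟨(mem_neighborFinset _ _ _).mp huv,
      hwu.symm, (mem_neighborFinset _ _ _).mp hvw⟩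
  simp [hwu]

end SimpleGraph

open Finset in
theorem pow_three_le_of_sum_pow_three_eq_zero {ι : Type*} [Fintype ι] [DecidableEq ι]
    {x : ι → ℝ} {r : ℝ} (i₀ : ι) (hsum : ∑ i, x i ^ 3 = 0) (hx : ∀ i, i ≠ i₀ → |x i| ≤ r) :
    x i₀ ^ 3 ≤ ((Fintype.card ι : ℝ) - 1) * r ^ 3 := by
  have hsplit := add_sum_erase univ (fun i => x i ^ 3) (mem_univ i₀)
  calc x i₀ ^ 3 = ∑ i ∈ univ.erase i₀, -x i ^ 3 := by
        rw [sum_neg_distrib]; linarith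
    _ ≤ ∑ _i ∈ univ.erase i₀, r ^ 3 := sum_le_sum fun i hi => calc
        -x i ^ 3 ≤ |x i| ^ 3 := by rw [← abs_pow]; exact neg_le_abs _
        _ ≤ r ^ 3 := pow_le_pow_left₀ (abs_nonneg _) (hx i (ne_of_mem_erase hi)) 3
    _ = ((Fintype.card ι : ℝ) - 1) * r ^ 3 := by
        rw [sum_const, card_erase_of_mem (mem_univ i₀), card_univ, nsmul_eq_mul,
          Nat.cast_pred (Fintype.card_pos_iff.mpr ⟨i₀⟩)]

theorem le_sq_mul_rpow_of_pow_three_le {d m r c : ℝ} (hd : 0 ≤ d) (hm : 0 ≤ m) (hr : 0 ≤ r)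
    (hrd : r ≤ c * √d) (h : d ^ 3 ≤ m * r ^ 3) : d ≤ c ^ 2 * m ^ ((2 : ℝ) / 3) := by
  rcases hd.eq_or_lt with rfl | hd0
  · positivity
  set s := √d
  set t := m ^ ((1 : ℝ) / 3)
  have hs : s ^ 2 = d := sq_sqrt hd
  have ht3 : t ^ 3 = m := by rw [← rpow_natCast, ← rpow_mul hm]; norm_num
  have ht2 : t ^ 2 = m ^ ((2 : ℝ) / 3) := by rw [← rpow_natCast, ← rpow_mul hm]; norm_num
  have hs0 : 0 < s := sqrt_pos.mpr hd0
  have hst : s ^ 3 ≤ (c * t) ^ 3 := by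
    refine le_of_mul_le_mul_right ?_ (pow_pos hs0 3)
    calc s ^ 3 * s ^ 3 = d ^ 3 := by rw [← hs]; ring
      _ ≤ m * r ^ 3 := h
      _ ≤ m * (c * s) ^ 3 := by gcongr
      _ = (c * t) ^ 3 * s ^ 3 := by rw [← ht3]; ring
  calc d = s ^ 2 := hs.symm
    _ ≤ (c * t) ^ 2 := pow_le_pow_left₀ hs0.le ((Odd.pow_le_pow (by decide)).mp hst) 2
    _ = c ^ 2 * m ^ ((2 : ℝ) / 3) := by rw [mul_pow, ht2]

namespace IsNDLGraph

variable {V : Type*} [Fintype V] [DecidableEq V] {G : SimpleGraph V} {n d : ℕ} {lam : ℝ}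

theorem pow_three_le_of_cliqueFree (hG : IsNDLGraph G n d lam) (htri : G.CliqueFree 3) :
    (d : ℝ) ^ 3 ≤ ((n : ℝ) - 1) * lam ^ 3 := by
  classical
  obtain ⟨hcard, -, i₀, hi₀, hbound⟩ := hG
  have hsum := (adjMatrix_isHermitian G).trace_pow_eq_sum_eigenvalues_pow 3
  rw [htri.trace_adjMatrix_pow_three] at hsum
  have := pow_three_le_of_sum_pow_three_eq_zero i₀ hsum.symm hbound
  rwa [hcard, hi₀] at this

theorem lam_nonneg (hG : IsNDLGraph G n d lam) (hn : 2 ≤ n) : 0 ≤ lam := by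
  obtain ⟨hcard, -, i₀, -, hbound⟩ := hG
  obtain ⟨i, hi⟩ := Fintype.exists_ne_of_one_lt_card (hcard ▸ hn) i₀
  exact (abs_nonneg _).trans (hbound i hi)

end IsNDLGraph

theorem statement17_general {V : Type*} [Fintype V] [DecidableEq V] (G : SimpleGraph V)
    (n d : ℕ) (lam : ℝ) (c : ℝ) (hG : IsNDLGraph G n d lam)
    (htri : G.CliqueFree 3) (hn : 2 ≤ n) (hlam : lam ≤ c * Real.sqrt d) :
    (d : ℝ) ≤ c ^ 2 * ((n : ℝ) - 1) ^ ((2 : ℝ) / 3) := by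
  have hn1 : (0 : ℝ) ≤ n - 1 := by
    have : (2 : ℝ) ≤ n := by exact_mod_cast hn
    linarith
  exact le_sq_mul_rpow_of_pow_three_le d.cast_nonneg hn1 (hG.lam_nonneg hn) hlam
    (hG.pow_three_le_of_cliqueFree htri)

/-- A triangle-free `(n,d,λ)`-graph with `n ≥ 2` and `λ ≤ c·√d` satisfies
`d ≤ c²·(n-1)^{2/3}`. -/
theorem statement17 {V : Type*} [Fintype V] [DecidableEq V] (G : SimpleGraph V)
    (n d : ℕ) (lam : ℝ) (c : ℝ) (hc : 0 < c) (hG : IsNDLGraph G n d lam)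
    (htri : G.CliqueFree 3) (hn : 2 ≤ n) (hlam : lam ≤ c * Real.sqrt d) :
    (d : ℝ) ≤ c ^ 2 * ((n : ℝ) - 1) ^ ((2 : ℝ) / 3) :=
  statement17_general G n d lam c hG htri hn hlam
end

section
/- Fix an integer s ≥ 3 and a constant c > 0. There exists a constant C = C(s,c) such that every K_s-free (n,d,λ)-graph with λ ≤ c·√d satisfies d ≤ C·n^{1 − 1/(2s−3)}. -/
open SimpleGraph Real

/-! The spectral hypothesis is only used through the lower bound `-λ` on the spectrum of the
adjacency matrix `A` (the top eigenvalue `d` is nonnegative), i.e. through `A + λ I ⪰ 0`. Testing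
this on the mean-free part of the indicator of a vertex set `U` shows that `U` spans at least
`d |U|² / n - λ |U|` ordered edges, so some `u ∈ U` has at least `d |U| / n - λ` neighbours in `U`.
Passing to that neighbourhood and iterating, every set of more than `(2λn/d) (2n/d)^t` vertices
contains a `K_{t+2}`. For `t = s - 2` and `U = V`, `K_s`-freeness gives
`d^(s-1) ≤ 2λ (2n)^(s-2) ≤ 2^(s-1) c √d n^(s-2)`, that is `d^(s-3/2) ≤ 2^(s-1) c n^(s-2)`. -/

open Finset Matrix

theorem Matrix.IsHermitian.neg_mul_dotProduct_self_le_dotProduct_mulVec {n : Type*} [Fintype n]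
    [DecidableEq n] {A : Matrix n n ℝ} (hA : A.IsHermitian) {lam : ℝ}
    (hev : ∀ i, -lam ≤ hA.eigenvalues i) (x : n → ℝ) :
    -lam * (x ⬝ᵥ x) ≤ x ⬝ᵥ A *ᵥ x := by
  have hpsd : (A + lam • 1).PosSemidef := by
    refine posSemidef_iff_isHermitian_and_spectrum_nonneg.mpr
      ⟨hA.add (isHermitian_one.smul (IsSelfAdjoint.all lam)), fun μ hμ => ?_⟩
    rw [← Algebra.algebraMap_eq_smul_one, ← spectrum.add_singleton_eq,
      hA.spectrum_real_eq_range_eigenvalues] at hμ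
    obtain ⟨_, ⟨i, rfl⟩, _, rfl, rfl⟩ := hμ
    simpa [← neg_le_iff_add_nonneg] using hev i
  have := hpsd.dotProduct_mulVec_nonneg x
  simp only [star_trivial, add_mulVec, smul_mulVec, one_mulVec, dotProduct_add,
    dotProduct_smul, smul_eq_mul] at this
  linarith

theorem Finset.indicator_one_dotProduct {V : Type*} [Fintype V] [DecidableEq V]
    (U : Finset V) (x : V → ℝ) :
    (fun v => if v ∈ U then (1 : ℝ) else 0) ⬝ᵥ x = ∑ u ∈ U, x u := by
  simp [dotProduct]

theorem Real.le_mul_rpow_of_pow_succ_le {d B n : ℝ} {k : ℕ} (hd : 0 ≤ d) (hB : 0 ≤ B)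
    (hn : 0 ≤ n) (h : d ^ (k + 1) ≤ B * √d * n ^ k) :
    d ≤ B ^ ((k + 1 / 2 : ℝ)⁻¹) * n ^ ((k : ℝ) / (k + 1 / 2)) := by
  obtain rfl | hd := hd.eq_or_lt
  · positivity
  have hk : (k : ℝ) + 1 / 2 ≠ 0 := by positivity
  have hsqrt : 0 < √d := Real.sqrt_pos.mpr hd
  have h' : d ^ ((k : ℝ) + 1 / 2) ≤ B * n ^ k := by
    refine le_of_mul_le_mul_right ?_ hsqrt
    calc d ^ ((k : ℝ) + 1 / 2) * √d = d ^ (k + 1) := by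
          rw [Real.sqrt_eq_rpow, ← Real.rpow_add hd, ← Real.rpow_natCast]
          norm_num [add_assoc]
      _ ≤ B * n ^ k * √d := by linarith
  calc d = (d ^ ((k : ℝ) + 1 / 2)) ^ ((k + 1 / 2 : ℝ)⁻¹) := (Real.rpow_rpow_inv hd.le hk).symm
    _ ≤ (B * n ^ k) ^ ((k + 1 / 2 : ℝ)⁻¹) := by gcongr
    _ = B ^ ((k + 1 / 2 : ℝ)⁻¹) * n ^ ((k : ℝ) / (k + 1 / 2)) := by
      rw [Real.mul_rpow hB (by positivity), ← Real.rpow_natCast, ← Real.rpow_mul hn,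
        ← div_eq_mul_inv]

namespace SimpleGraph

variable {V : Type*} [Fintype V] {G : SimpleGraph V} [DecidableRel G.Adj]

theorem IsRegularOfDegree.adjMatrix_mulVec_one {d : ℕ} (hreg : G.IsRegularOfDegree d) :
    G.adjMatrix ℝ *ᵥ 1 = (d : ℝ) • 1 := by
  ext v
  simpa using adjMatrix_mulVec_const_apply_of_regular (a := (1 : ℝ)) hreg

variable [DecidableEq V]

theorem adjMatrix_mulVec_indicator_one_apply (U : Finset V) (v : V) :
    (G.adjMatrix ℝ *ᵥ fun w => if w ∈ U then 1 else 0) v = #(G.neighborFinset v ∩ U) := by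
  rw [adjMatrix_mulVec_apply, sum_boole, filter_mem_eq_inter]

/-- The lower half of the expander mixing lemma; the sum counts the edges inside `U` twice. -/
theorem IsRegularOfDegree.mul_card_sq_sub_le_sum_card_neighborFinset_inter [Nonempty V] {d : ℕ}
    (hreg : G.IsRegularOfDegree d) {lam : ℝ} (hlam : 0 ≤ lam)
    (hev : ∀ i, -lam ≤ (adjMatrix_isHermitian G).eigenvalues i) (U : Finset V) :
    d * #U ^ 2 - lam * Fintype.card V * #U
      ≤ Fintype.card V * ∑ u ∈ U, (#(G.neighborFinset u ∩ U) : ℝ) := by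
  set χ : V → ℝ := fun v => if v ∈ U then 1 else 0
  set N : ℝ := (Fintype.card V : ℝ)
  set m : ℝ := (#U : ℝ)
  set e : ℝ := ∑ u ∈ U, (#(G.neighborFinset u ∩ U) : ℝ)
  have hN : 0 < N := by positivity
  have hχ1 : χ ⬝ᵥ 1 = m := by simp [χ, indicator_one_dotProduct, m]
  have h1χ : 1 ⬝ᵥ χ = m := by rw [dotProduct_comm, hχ1]
  have h11 : (1 : V → ℝ) ⬝ᵥ 1 = N := by simp [N]
  have hχχ : χ ⬝ᵥ χ = m := by simp [χ, indicator_one_dotProduct, m]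
  have hχAχ : χ ⬝ᵥ G.adjMatrix ℝ *ᵥ χ = e := by
    simp only [χ, indicator_one_dotProduct, adjMatrix_mulVec_indicator_one_apply, e]
  have h1Aχ : 1 ⬝ᵥ G.adjMatrix ℝ *ᵥ χ = d * m := by
    rw [dotProduct_mulVec, ← mulVec_transpose, transpose_adjMatrix, hreg.adjMatrix_mulVec_one,
      smul_dotProduct, dotProduct_comm, hχ1, smul_eq_mul]
  have hχA1 : χ ⬝ᵥ G.adjMatrix ℝ *ᵥ 1 = d * m := by
    rw [hreg.adjMatrix_mulVec_one, dotProduct_smul, hχ1, smul_eq_mul]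
  have h1A1 : 1 ⬝ᵥ G.adjMatrix ℝ *ᵥ 1 = d * N := by
    rw [hreg.adjMatrix_mulVec_one, dotProduct_smul, h11, smul_eq_mul]
  -- the mean-free part of the indicator of `U`, scaled by `N` to avoid division
  have key := (adjMatrix_isHermitian G).neg_mul_dotProduct_self_le_dotProduct_mulVec hev
    (N • χ - m • 1)
  simp only [mulVec_sub, mulVec_smul, sub_dotProduct, dotProduct_sub, smul_dotProduct,
    dotProduct_smul, smul_eq_mul, hχ1, h1χ, h11, hχχ, hχAχ, h1Aχ, hχA1, h1A1] at key
  nlinarith [mul_nonneg hlam (sq_nonneg m)]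

theorem IsRegularOfDegree.exists_mem_mul_card_sub_le_card_neighborFinset_inter [Nonempty V]
    {d : ℕ} (hreg : G.IsRegularOfDegree d) {lam : ℝ} (hlam : 0 ≤ lam)
    (hev : ∀ i, -lam ≤ (adjMatrix_isHermitian G).eigenvalues i) {U : Finset V}
    (hU : U.Nonempty) :
    ∃ u ∈ U, d * #U - lam * Fintype.card V ≤ Fintype.card V * #(G.neighborFinset u ∩ U) := by
  refine exists_le_of_sum_le hU ?_
  have := hreg.mul_card_sq_sub_le_sum_card_neighborFinset_inter hlam hev U
  simp only [sum_const, nsmul_eq_mul, ← mul_sum]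
  linarith

/-- The hypothesis says `#U > (2λN/d) (2N/d)^t` with `N = card V`, cleared of denominators. -/
theorem IsRegularOfDegree.exists_isNClique_subset [Nonempty V] {d : ℕ}
    (hreg : G.IsRegularOfDegree d) {lam : ℝ} (hlam : 0 ≤ lam)
    (hev : ∀ i, -lam ≤ (adjMatrix_isHermitian G).eigenvalues i) (t : ℕ) {U : Finset V}
    (hU : 2 * lam * (2 * Fintype.card V) ^ t * Fintype.card V < (d : ℝ) ^ (t + 1) * #U) :
    ∃ K ⊆ U, G.IsNClique (t + 2) K := by
  have hN : (0 : ℝ) < Fintype.card V := by positivity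
  have exists_rich (t : ℕ) {U : Finset V}
      (hU : 2 * lam * (2 * Fintype.card V) ^ t * Fintype.card V < (d : ℝ) ^ (t + 1) * #U) :
      ∃ u ∈ U, d * #U - lam * Fintype.card V ≤ Fintype.card V * #(G.neighborFinset u ∩ U) := by
    refine hreg.exists_mem_mul_card_sub_le_card_neighborFinset_inter hlam hev ?_
    rw [← card_pos, ← Nat.cast_pos (α := ℝ)]
    refine pos_of_mul_pos_right (a := (d : ℝ) ^ (t + 1)) ?_ (by positivity)
    exact lt_of_le_of_lt (by positivity) hU
  induction t generalizing U with
  | zero =>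
    obtain ⟨u, hu, hdeg⟩ := exists_rich 0 hU
    simp only [pow_zero, mul_one, zero_add, pow_one] at hU
    obtain ⟨w, hw⟩ : (G.neighborFinset u ∩ U).Nonempty := by
      rw [← card_pos, ← Nat.cast_pos (α := ℝ)]
      refine pos_of_mul_pos_right (a := (Fintype.card V : ℝ)) ?_ hN.le
      nlinarith
    rw [mem_inter, mem_neighborFinset] at hw
    refine ⟨{u, w}, by simp [insert_subset_iff, hu, hw.2], ?_⟩
    exact (isNClique_singleton.mpr rfl).insert (by simpa using hw.1)
  | succ t ih =>
    obtain ⟨u, hu, hdeg⟩ := exists_rich _ hU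
    have hdN : (d : ℝ) ≤ 2 * Fintype.card V := by
      have : (d : ℝ) < Fintype.card V := by
        exact_mod_cast hreg u ▸ G.degree_lt_card_verts u
      linarith
    have hUd : 2 * lam * Fintype.card V ≤ d * #U := by
      refine le_of_lt (lt_of_mul_lt_mul_left (a := (2 * (Fintype.card V : ℝ)) ^ (t + 1)) ?_
        (by positivity))
      calc _ = 2 * lam * (2 * Fintype.card V) ^ (t + 1) * Fintype.card V := by ring
        _ < (d : ℝ) ^ (t + 1) * (d * #U) := by rw [← mul_assoc, ← pow_succ]; exact hU
        _ ≤ _ := by gcongr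
    have hU' : 2 * lam * (2 * Fintype.card V) ^ t * Fintype.card V
        < (d : ℝ) ^ (t + 1) * #(G.neighborFinset u ∩ U) := by
      refine lt_of_mul_lt_mul_left (a := 2 * (Fintype.card V : ℝ)) ?_ (by positivity)
      calc _ = 2 * lam * (2 * Fintype.card V) ^ (t + 1) * Fintype.card V := by ring
        _ < (d : ℝ) ^ (t + 1 + 1) * #U := hU
        _ = (d : ℝ) ^ (t + 1) * (d * #U) := by ring
        _ ≤ (d : ℝ) ^ (t + 1) * (2 * Fintype.card V * #(G.neighborFinset u ∩ U)) := by
          exact mul_le_mul_of_nonneg_left (by linarith) (by positivity)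
        _ = _ := by ring
    obtain ⟨K, hKU, hK⟩ := ih hU'
    refine ⟨insert u K, insert_subset hu (hKU.trans inter_subset_right), hK.insert ?_⟩
    intro w hw
    simpa using (mem_inter.mp (hKU hw)).1

theorem CliqueFree.pow_succ_le_of_isRegularOfDegree [Nonempty V] {d t : ℕ}
    (hfree : G.CliqueFree (t + 2)) (hreg : G.IsRegularOfDegree d) {lam : ℝ} (hlam : 0 ≤ lam)
    (hev : ∀ i, -lam ≤ (adjMatrix_isHermitian G).eigenvalues i) :
    (d : ℝ) ^ (t + 1) ≤ 2 * lam * (2 * Fintype.card V) ^ t := by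
  by_contra! h
  have hU : 2 * lam * (2 * Fintype.card V) ^ t * Fintype.card V
      < (d : ℝ) ^ (t + 1) * #(univ : Finset V) := by
    rw [card_univ]
    exact mul_lt_mul_of_pos_right h (by positivity)
  obtain ⟨K, -, hK⟩ := hreg.exists_isNClique_subset hlam hev t hU
  exact hfree K hK

end SimpleGraph

/-- Sudakov–Szabó–Vu bound, as stated in the paper.
Fix `s ≥ 3` and `c > 0`. There is a constant `C = C(s,c)` such that every
`K_s`-free `(n,d,λ)`-graph with `λ ≤ c·√d` satisfies `d ≤ C·n^{1-1/(2s-3)}`. -/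
theorem statement18 (s : ℕ) (hs : 3 ≤ s) (c : ℝ) (hc : 0 < c) :
    ∃ C : ℝ, ∀ (V : Type) [Fintype V] [DecidableEq V]
      (G : SimpleGraph V) (n d : ℕ) (lam : ℝ),
      IsNDLGraph G n d lam → G.CliqueFree s → lam ≤ c * Real.sqrt d →
      (d : ℝ) ≤ C * (n : ℝ) ^ (1 - 1 / (2 * (s : ℝ) - 3)) := by
  obtain ⟨k, rfl⟩ : ∃ k, s = k + 2 := ⟨s - 2, by omega⟩
  refine ⟨(2 ^ (k + 1) * c) ^ ((k + 1 / 2 : ℝ)⁻¹), ?_⟩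
  intro V _ _ G n d lam ⟨hcard, hreg, i₀, hi₀, hev⟩ hfree hlam
  subst hcard
  let _ := Classical.decRel G.Adj
  have : Nonempty V := ⟨i₀⟩
  -- `lam` itself may be negative when `V` is a single vertex
  have hev' (i : V) : -max lam 0 ≤ (adjMatrix_isHermitian G).eigenvalues i := by
    obtain rfl | hi := eq_or_ne i i₀
    · rw [hi₀]; linarith [le_max_right lam 0, (d.cast_nonneg : (0 : ℝ) ≤ d)]
    · exact (neg_le_neg (le_max_left _ _)).trans (neg_le_of_abs_le (hev i hi))
  have hturan := hfree.pow_succ_le_of_isRegularOfDegree hreg (le_max_right _ _) hev'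
  have hexp : 1 - 1 / (2 * ((k + 2 : ℕ) : ℝ) - 3) = k / (k + 1 / 2) := by
    rw [Nat.cast_add, Nat.cast_two, show 2 * ((k : ℝ) + 2) - 3 = 2 * (k + 1 / 2) by ring]
    field_simp
    ring
  rw [hexp]
  refine Real.le_mul_rpow_of_pow_succ_le d.cast_nonneg (by positivity) (by positivity) ?_
  calc (d : ℝ) ^ (k + 1) ≤ 2 * max lam 0 * (2 * Fintype.card V) ^ k := hturan
    _ ≤ 2 * (c * √d) * (2 * Fintype.card V) ^ k := by
      gcongr
      exact max_le hlam (by positivity)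
    _ = 2 ^ (k + 1) * c * √d * Fintype.card V ^ k := by ring
end
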